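/- (Theorem 2 applied to coefficient estimates.) Let γ > 0, let x, x₁, …, x_N ∈ ℝ² (N ≥ 1), let w₀, w₁, …, w_N be real numbers such that for all i, j, if ‖xᵢ − x‖ ≤ ‖xⱼ − x‖ then |wᵢ − w₀| ≤ |wⱼ − w₀|, and set kᵢ = exp(−‖xᵢ − x‖²/(2γ)). Then the kernel-estimated coefficient satisfies |(Σᵢ kᵢ wᵢ)/(Σᵢ kᵢ) − w₀| ≤ (1/N)·Σᵢ |wᵢ − w₀|; in particular the kernel estimation error is bounded by the mean absolute deviation of the adjacent coefficient values from the true coefficient w₀. -/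

import Mathlib

/-! The kernel estimate is a weighted mean of the `wᵢ`, so its error is at most the weighted mean
of the deviations `|wᵢ - w₀|`. The Gaussian weights decrease with the distance to `x` while the
deviations increase with it, so weights and deviations are oppositely ordered, and Chebyshev's sum
inequality bounds their weighted mean by the plain mean. -/

open Finset Real

theorem abs_sum_mul_div_sum_sub_le {ι : Type*} (s : Finset ι) {k : ι → ℝ} (w : ι → ℝ) (c : ℝ)
    (hk : ∀ i ∈ s, 0 ≤ k i) (hs : 0 < ∑ i ∈ s, k i) :
    |(∑ i ∈ s, k i * w i) / (∑ i ∈ s, k i) - c| ≤ (∑ i ∈ s, k i * |w i - c|) / ∑ i ∈ s, k i := by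
  have hdev : (∑ i ∈ s, k i * w i) / (∑ i ∈ s, k i) - c
      = (∑ i ∈ s, k i * (w i - c)) / ∑ i ∈ s, k i := by
    simp only [mul_sub, sum_sub_distrib, ← sum_mul]
    field_simp
  rw [hdev, abs_div, abs_of_pos hs]
  gcongr
  calc |∑ i ∈ s, k i * (w i - c)| ≤ ∑ i ∈ s, |k i * (w i - c)| := abs_sum_le_sum_abs _ _
    _ = ∑ i ∈ s, k i * |w i - c| :=
      sum_congr rfl fun i hi => by rw [abs_mul, abs_of_nonneg (hk i hi)]

theorem Antivary.sum_mul_div_sum_le_mean {ι : Type*} [Fintype ι] {k g : ι → ℝ}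
    (hkg : Antivary k g) (hk : 0 < ∑ i, k i) :
    (∑ i, k i * g i) / ∑ i, k i ≤ (1 / Fintype.card ι) * ∑ i, g i := by
  have : Nonempty ι := let ⟨i, _, _⟩ := exists_ne_zero_of_sum_ne_zero hk.ne'; ⟨i⟩
  have hcard : (0 : ℝ) < Fintype.card ι := by exact_mod_cast Fintype.card_pos
  rw [div_le_iff₀ hk, one_div_mul_eq_div, div_mul_eq_mul_div, le_div_iff₀ hcard]
  linarith [hkg.card_mul_sum_le_sum_mul_sum]

theorem antitoneOn_exp_neg_sq_div {γ : ℝ} (hγ : 0 ≤ γ) :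
    AntitoneOn (fun r : ℝ => exp (-r ^ 2 / (2 * γ))) (Set.Ici 0) := by
  intro r hr t _ hrt
  simp only [exp_le_exp]
  gcongr

/-- Theorem 2 applied to coefficient estimates: the Gaussian-kernel estimated
coefficient deviates from the true coefficient `w₀` by at most the mean
absolute deviation of the adjacent fitted coefficients from `w₀`. -/
theorem kernel_estimated_coefficient_error_le_mean_absolute_deviation
    (γ : ℝ) (hγ : 0 < γ) (N : ℕ) (hN : 1 ≤ N)
    (x : EuclideanSpace ℝ (Fin 2)) (xs : Fin N → EuclideanSpace ℝ (Fin 2))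
    (w₀ : ℝ) (w : Fin N → ℝ)
    (hmono : ∀ i j, ‖xs i - x‖ ≤ ‖xs j - x‖ → |w i - w₀| ≤ |w j - w₀|) :
    |(∑ i, Real.exp (-‖xs i - x‖ ^ 2 / (2 * γ)) * w i) /
        (∑ i, Real.exp (-‖xs i - x‖ ^ 2 / (2 * γ))) - w₀|
      ≤ (1 / (N : ℝ)) * ∑ i, |w i - w₀| := by
  set d : Fin N → ℝ := fun i => ‖xs i - x‖
  set k : Fin N → ℝ := fun i => exp (-d i ^ 2 / (2 * γ))
  have : Nonempty (Fin N) := Fin.pos_iff_nonempty.1 hN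
  have hk : 0 < ∑ i, k i := sum_pos (fun i _ => exp_pos _) univ_nonempty
  have hdev : Monovary (fun i => |w i - w₀|) d := fun i j hij => hmono i j hij.le
  have hkg : Antivary k (fun i => |w i - w₀|) :=
    (antivaryOn_univ.1 <| (monovaryOn_univ.2 hdev).comp_antitoneOn_right <|
      (antitoneOn_exp_neg_sq_div hγ.le).mono <| by
        rintro _ ⟨i, -, rfl⟩; exact norm_nonneg _).symm
  calc _ ≤ (∑ i, k i * |w i - w₀|) / ∑ i, k i :=
        abs_sum_mul_div_sum_sub_le _ w w₀ (fun i _ => (exp_pos _).le) hk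
    _ ≤ _ := by simpa using hkg.sum_mul_div_sum_le_mean hk
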